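/- arXiv:2512.11504 — 3 statements merged into one kernel-verified Lean document; each statement's English description precedes it below -/
import Mathlib

section
/- Let G₁, G₂ be two-terminal graphs and G₁ ∥ G₂ their parallel composition (identifying sources and identifying sinks). Then the split reliability polynomials satisfy S(G₁ ∥ G₂; p) = S(G₁; p) · S(G₂; p) as polynomials in p. -/
open scoped Classical

/-- A (multi)graph: a vertex type, a finite edge type, and an endpoint map
sending each edge to an unordered pair of vertices. -/
structure Multigraph where
  V : Type
  E : Type
  [fintE : Fintype E]
  ends : E → Sym2 V

attribute [instance] Multigraph.fintE

namespace Multigraph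

/-- The simple graph on the vertices of `G` induced by a set `A` of edges:
two distinct vertices are adjacent if some edge of `A` joins them. -/
def graphOf (G : Multigraph) (A : Finset G.E) : SimpleGraph G.V where
  Adj u v := u ≠ v ∧ ∃ e ∈ A, G.ends e = s(u, v)
  symm := ⟨by
    rintro u v ⟨h, e, he, hev⟩
    exact ⟨h.symm, e, he, by rw [hev, Sym2.eq_swap]⟩⟩
  loopless := ⟨by rintro v ⟨h, -⟩; exact h rfl⟩

/-- The (all-terminal) reliability polynomial of `G`, evaluated at the edge
failure probability `p`. -/
noncomputable def rel (G : Multigraph) (p : ℂ) : ℂ :=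
  ∑ A : Finset G.E,
    if (G.graphOf A).Connected then (1 - p) ^ A.card * p ^ (Fintype.card G.E - A.card) else 0

end Multigraph

/-- A two-terminal graph: a multigraph together with two distinct distinguished
vertices, the source `s` and the sink `t`. -/
structure TTGraph extends Multigraph where
  s : V
  t : V
  hst : s ≠ t

namespace TTGraph

/-- The reliability polynomial of a two-terminal graph. -/
noncomputable def rel (G : TTGraph) (p : ℂ) : ℂ := G.toMultigraph.rel p

/-- `A` is an `s`–`t` split: every vertex is joined by a path (within `A`) to
exactly one of `s`, `t`. -/
def IsSplit (G : TTGraph) (A : Finset G.toMultigraph.E) : Prop :=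
  ∀ v : G.V, Xor' ((G.toMultigraph.graphOf A).Reachable v G.s)
    ((G.toMultigraph.graphOf A).Reachable v G.t)

/-- The split reliability polynomial of a two-terminal graph. -/
noncomputable def split (G : TTGraph) (p : ℂ) : ℂ :=
  ∑ A : Finset G.toMultigraph.E,
    if G.IsSplit A then (1 - p) ^ A.card * p ^ (Fintype.card G.toMultigraph.E - A.card) else 0

/-- The effective edge interaction `y_G(p)`. -/
noncomputable def yEff (G : TTGraph) (p : ℂ) : ℂ := (1 - p) * G.split p / G.rel p + 1

/-- The virtual edge interaction `ŷ_G(p)`. -/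
noncomputable def yVirt (G : TTGraph) (p : ℂ) : ℂ := G.rel p / G.split p + 1

/-- The identifications made in the parallel composition: the two sources are
identified and the two sinks are identified. -/
def parRel (G₁ G₂ : TTGraph) : (G₁.V ⊕ G₂.V) → (G₁.V ⊕ G₂.V) → Prop :=
  fun a b => (a = .inl G₁.s ∧ b = .inr G₂.s) ∨ (a = .inl G₁.t ∧ b = .inr G₂.t)

/-- The parallel composition `G₁ ∥ G₂` of two two-terminal graphs. -/
noncomputable def par (G₁ G₂ : TTGraph) : TTGraph where
  V := Quot (parRel G₁ G₂)
  E := G₁.toMultigraph.E ⊕ G₂.toMultigraph.E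
  ends := Sum.elim (fun e => (G₁.ends e).map (Quot.mk _ ∘ Sum.inl))
    (fun e => (G₂.ends e).map (Quot.mk _ ∘ Sum.inr))
  s := Quot.mk _ (.inl G₁.s)
  t := Quot.mk _ (.inl G₁.t)
  hst := by
    intro h
    have hresp : ∀ a b, parRel G₁ G₂ a b →
        (Sum.elim (fun v => v = G₁.t) (fun v => v = G₂.t) a : Prop) =
        (Sum.elim (fun v => v = G₁.t) (fun v => v = G₂.t) b : Prop) := by
      rintro a b (⟨rfl, rfl⟩ | ⟨rfl, rfl⟩) <;> simp [G₁.hst, G₂.hst]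
    have := congrArg (Quot.lift _ hresp) h
    simp [G₁.hst] at this

/-- The identification made in the series composition: the sink of `G₁` is
identified with the source of `G₂`. -/
def serRel (G₁ G₂ : TTGraph) : (G₁.V ⊕ G₂.V) → (G₁.V ⊕ G₂.V) → Prop :=
  fun a b => a = .inl G₁.t ∧ b = .inr G₂.s

/-- The series composition `G₁ ⋈ G₂` of two two-terminal graphs. -/
noncomputable def ser (G₁ G₂ : TTGraph) : TTGraph where
  V := Quot (serRel G₁ G₂)
  E := G₁.toMultigraph.E ⊕ G₂.toMultigraph.E
  ends := Sum.elim (fun e => (G₁.ends e).map (Quot.mk _ ∘ Sum.inl))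
    (fun e => (G₂.ends e).map (Quot.mk _ ∘ Sum.inr))
  s := Quot.mk _ (.inl G₁.s)
  t := Quot.mk _ (.inr G₂.t)
  hst := by
    intro h
    have hresp : ∀ a b, serRel G₁ G₂ a b →
        (Sum.elim (fun v => v = G₁.t) (fun _ => True) a : Prop) =
        (Sum.elim (fun v => v = G₁.t) (fun _ => True) b : Prop) := by
      rintro a b ⟨rfl, rfl⟩; simp
    have := congrArg (Quot.lift _ hresp) h
    simp [G₁.hst] at this

end TTGraph

/-!
An edge set of `G₁ ∥ G₂` is a pair `(A₁, A₂)` of edge sets of the two factors, and its weight is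
the product of their weights. So it suffices that `A₁ ⊕ A₂` is an `s`–`t` split of `G₁ ∥ G₂`
exactly when each `Aᵢ` is a split of `Gᵢ`. A split is the same as a spanning subgraph in which
`s` and `t` are disconnected and every vertex reaches one of them. Paths of the factors survive
in the composition; conversely a property of vertices that is constant on the components of both
factors and agrees at the two identified pairs of terminals is constant on the components of the
composition, since every edge of the composition lies in one factor.
-/

lemma SimpleGraph.Reachable.iff_of_forall_adj {V : Type*} {G : SimpleGraph V} {q : V → Prop}
    (hq : ∀ x y, G.Adj x y → (q x ↔ q y)) {x y : V} (h : G.Reachable x y) : q x ↔ q y := by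
  obtain ⟨w⟩ := h
  induction w with
  | nil => rfl
  | cons hadj _ ih => exact (hq _ _ hadj).trans ih

lemma SimpleGraph.Reachable.reachable_iff {V : Type*} {G : SimpleGraph V} {a b : V}
    (h : G.Reachable a b) (c : V) : G.Reachable a c ↔ G.Reachable b c :=
  ⟨h.symm.trans, h.trans⟩

lemma Sym2.iff_of_map_eq_mk {α β : Type*} {f : α → β} {q : β → Prop} {z : Sym2 α} {x y : β}
    (hz : ∀ a b, z = s(a, b) → (q (f a) ↔ q (f b))) (h : z.map f = s(x, y)) : q x ↔ q y := by
  induction z using Sym2.ind with | _ a b => ?_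
  rw [Sym2.map_mk, Sym2.eq_iff] at h
  rcases h with ⟨rfl, rfl⟩ | ⟨rfl, rfl⟩
  exacts [hz a b rfl, (hz a b rfl).symm]

namespace Multigraph

variable {G H : Multigraph}

lemma reachable_of_ends_eq {A : Finset G.E} {e : G.E} (he : e ∈ A) {a b : G.V}
    (hab : G.ends e = s(a, b)) : (G.graphOf A).Reachable a b := by
  by_cases h : a = b
  · exact h ▸ SimpleGraph.Reachable.refl a
  · exact SimpleGraph.Adj.reachable ⟨h, e, he, hab⟩

lemma iff_of_reachable {A : Finset G.E} {q : G.V → Prop}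
    (hq : ∀ e ∈ A, ∀ a b, G.ends e = s(a, b) → (q a ↔ q b)) {x y : G.V}
    (h : (G.graphOf A).Reachable x y) : q x ↔ q y :=
  h.iff_of_forall_adj <| by
    rintro _ _ ⟨-, e, he, hab⟩
    exact hq e he _ _ hab

lemma reachable_map {f : G.V → H.V} {g : G.E → H.E}
    (hends : ∀ e, H.ends (g e) = (G.ends e).map f) {A : Finset G.E} {B : Finset H.E}
    (hAB : ∀ e ∈ A, g e ∈ B) {a b : G.V} (h : (G.graphOf A).Reachable a b) :
    (H.graphOf B).Reachable (f a) (f b) := by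
  obtain ⟨w⟩ := h
  induction w with
  | nil => rfl
  | cons hadj _ ih =>
    obtain ⟨-, e, he, hab⟩ := hadj
    refine (reachable_of_ends_eq (hAB e he) ?_).trans ih
    rw [hends, hab, Sym2.map_mk]

end Multigraph

lemma pow_mul_pow_sub_add_add {M : Type*} [CommMonoid M] (x y : M) {a₁ a₂ n₁ n₂ : ℕ}
    (h₁ : a₁ ≤ n₁) (h₂ : a₂ ≤ n₂) :
    x ^ (a₁ + a₂) * y ^ (n₁ + n₂ - (a₁ + a₂)) = x ^ a₁ * y ^ (n₁ - a₁) * (x ^ a₂ * y ^ (n₂ - a₂)) := by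
  rw [show n₁ + n₂ - (a₁ + a₂) = (n₁ - a₁) + (n₂ - a₂) by omega, pow_add, pow_add,
    mul_mul_mul_comm]

namespace TTGraph

lemma isSplit_iff (G : TTGraph) (A : Finset G.E) :
    G.IsSplit A ↔ ¬(G.graphOf A).Reachable G.s G.t ∧
      ∀ v, (G.graphOf A).Reachable v G.s ∨ (G.graphOf A).Reachable v G.t := by
  refine ⟨fun h => ⟨fun hst => ?_, fun v => Xor.or (h v)⟩, fun ⟨hst, hcov⟩ v => ?_⟩
  · rcases h G.s with ⟨-, hn⟩ | ⟨-, hn⟩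
    exacts [hn hst, hn .rfl]
  · rcases hcov v with hs | ht
    · exact .inl ⟨hs, fun ht => hst (hs.symm.trans ht)⟩
    · exact .inr ⟨ht, fun hs => hst (hs.symm.trans ht)⟩

variable (G : TTGraph) (p : ℂ) in
noncomputable def splitWeight (A : Finset G.E) : ℂ :=
  if G.IsSplit A then (1 - p) ^ A.card * p ^ (Fintype.card G.E - A.card) else 0

lemma split_eq_sum_splitWeight (G : TTGraph) (p : ℂ) : G.split p = ∑ A, G.splitWeight p A := rfl

variable {G₁ G₂ : TTGraph}

section Par

variable (G₁ G₂) in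
def parInl : G₁.V → (G₁.par G₂).V := Quot.mk _ ∘ Sum.inl

variable (G₁ G₂) in
def parInr : G₂.V → (G₁.par G₂).V := Quot.mk _ ∘ Sum.inr

lemma parInr_s : parInr G₁ G₂ G₂.s = (G₁.par G₂).s := Quot.sound (.inl ⟨rfl, rfl⟩) |>.symm

lemma parInr_t : parInr G₁ G₂ G₂.t = (G₁.par G₂).t := Quot.sound (.inr ⟨rfl, rfl⟩) |>.symm

def parLift (P₁ : G₁.V → Prop) (P₂ : G₂.V → Prop) (hs : P₁ G₁.s ↔ P₂ G₂.s)
    (ht : P₁ G₁.t ↔ P₂ G₂.t) : (G₁.par G₂).V → Prop :=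
  Quot.lift (Sum.elim P₁ P₂) <| by
    rintro _ _ (⟨rfl, rfl⟩ | ⟨rfl, rfl⟩)
    exacts [propext hs, propext ht]

variable {A₁ : Finset G₁.E} {A₂ : Finset G₂.E}

lemma reachable_parInl {a b : G₁.V} (h : (G₁.graphOf A₁).Reachable a b) :
    ((G₁.par G₂).graphOf (A₁.disjSum A₂)).Reachable (parInl G₁ G₂ a) (parInl G₁ G₂ b) :=
  Multigraph.reachable_map (g := Sum.inl) (fun _ => rfl)
    (fun _ he => Finset.inl_mem_disjSum.mpr he) h

lemma reachable_parInr {a b : G₂.V} (h : (G₂.graphOf A₂).Reachable a b) :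
    ((G₁.par G₂).graphOf (A₁.disjSum A₂)).Reachable (parInr G₁ G₂ a) (parInr G₁ G₂ b) :=
  Multigraph.reachable_map (g := Sum.inr) (fun _ => rfl)
    (fun _ he => Finset.inr_mem_disjSum.mpr he) h

lemma parLift_iff_of_reachable {P₁ : G₁.V → Prop} {P₂ : G₂.V → Prop}
    (h₁ : ∀ a b, (G₁.graphOf A₁).Reachable a b → (P₁ a ↔ P₁ b))
    (h₂ : ∀ a b, (G₂.graphOf A₂).Reachable a b → (P₂ a ↔ P₂ b))
    (hs : P₁ G₁.s ↔ P₂ G₂.s) (ht : P₁ G₁.t ↔ P₂ G₂.t) {x y : (G₁.par G₂).V}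
    (h : ((G₁.par G₂).graphOf (A₁.disjSum A₂)).Reachable x y) :
    parLift P₁ P₂ hs ht x ↔ parLift P₁ P₂ hs ht y := by
  refine Multigraph.iff_of_reachable (fun e he x y hxy => ?_) h
  rcases e with e | e
  · exact Sym2.iff_of_map_eq_mk (f := parInl G₁ G₂) (fun a b hab =>
      h₁ a b (Multigraph.reachable_of_ends_eq (Finset.inl_mem_disjSum.mp he) hab)) hxy
  · exact Sym2.iff_of_map_eq_mk (f := parInr G₁ G₂) (fun a b hab =>
      h₂ a b (Multigraph.reachable_of_ends_eq (Finset.inr_mem_disjSum.mp he) hab)) hxy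

lemma isSplit_par_iff :
    (G₁.par G₂).IsSplit (A₁.disjSum A₂) ↔ G₁.IsSplit A₁ ∧ G₂.IsSplit A₂ := by
  set R₁ := (G₁.graphOf A₁).Reachable
  set R₂ := (G₂.graphOf A₂).Reachable
  rw [isSplit_iff, isSplit_iff]
  refine (isSplit_iff _ _).trans ⟨?_, ?_⟩
  · rintro ⟨hst, hcov⟩
    have hst₁ : ¬R₁ G₁.s G₁.t := fun h => hst (reachable_parInl h)
    have hst₂ : ¬R₂ G₂.s G₂.t := fun h => hst <| by
      simpa only [parInr_s, parInr_t] using reachable_parInr (A₁ := A₁) h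
    have hs : (R₁ G₁.s G₁.s ∨ R₁ G₁.s G₁.t) ↔ (R₂ G₂.s G₂.s ∨ R₂ G₂.s G₂.t) :=
      iff_of_true (.inl .rfl) (.inl .rfl)
    have ht : (R₁ G₁.t G₁.s ∨ R₁ G₁.t G₁.t) ↔ (R₂ G₂.t G₂.s ∨ R₂ G₂.t G₂.t) :=
      iff_of_true (.inr .rfl) (.inr .rfl)
    have hq : ∀ x, parLift _ _ hs ht x := fun x => by
      have hR {y} := parLift_iff_of_reachable (x := x) (y := y)
        (fun _ _ h => or_congr (h.reachable_iff _) (h.reachable_iff _))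
        (fun _ _ h => or_congr (h.reachable_iff _) (h.reachable_iff _)) hs ht
      rcases hcov x with h | h
      exacts [(hR h).mpr (.inl .rfl), (hR h).mpr (.inr .rfl)]
    exact ⟨⟨hst₁, fun v => hq (parInl G₁ G₂ v)⟩, ⟨hst₂, fun v => hq (parInr G₁ G₂ v)⟩⟩
  · rintro ⟨⟨hst₁, hcov₁⟩, ⟨hst₂, hcov₂⟩⟩
    refine ⟨fun h => ?_, fun x => ?_⟩
    · have hR := parLift_iff_of_reachable (P₁ := (R₁ · G₁.s)) (P₂ := (R₂ · G₂.s))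
        (fun a b h => h.reachable_iff _) (fun a b h => h.reachable_iff _) (iff_of_true .rfl .rfl)
        (iff_of_false (fun h => hst₁ h.symm) (fun h => hst₂ h.symm)) h
      exact hst₁ (hR.mp .rfl).symm
    · induction x using Quot.ind with | mk v => ?_
      rcases v with v | v
      · exact (hcov₁ v).imp reachable_parInl reachable_parInl
      · rw [← parInr_s, ← parInr_t]
        exact (hcov₂ v).imp reachable_parInr reachable_parInr

lemma card_par_E : Fintype.card (G₁.par G₂).E = Fintype.card G₁.E + Fintype.card G₂.E :=
  Fintype.card_sum

lemma splitWeight_par (p : ℂ) (A₁ : Finset G₁.E) (A₂ : Finset G₂.E) :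
    (G₁.par G₂).splitWeight p (A₁.disjSum A₂) = G₁.splitWeight p A₁ * G₂.splitWeight p A₂ := by
  unfold splitWeight
  rw [ite_zero_mul_ite_zero, ← pow_mul_pow_sub_add_add _ _ (Finset.card_le_univ A₁)
    (Finset.card_le_univ A₂), ← Finset.card_disjSum, ← card_par_E]
  exact if_congr isSplit_par_iff rfl rfl

end Par

end TTGraph

/-- The split reliability polynomial is multiplicative under parallel
composition: `S(G₁ ∥ G₂; p) = S(G₁; p) · S(G₂; p)`. -/
theorem split_par (G₁ G₂ : TTGraph) (p : ℂ) :
    (G₁.par G₂).split p = G₁.split p * G₂.split p := by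
  simp only [TTGraph.split_eq_sum_splitWeight]
  rw [Finset.sum_mul_sum, ← Fintype.sum_prod_type']
  exact (Fintype.sum_equiv (Finset.sumEquiv.symm.toEquiv : _ ≃ Finset (G₁.par G₂).E) _ _
    fun A => (TTGraph.splitWeight_par p A.1 A.2).symm).symm
end

section
/- Let G be a two-terminal graph with terminals s,t and let Ĝ denote the graph obtained by merging s and t into a single vertex (edges between s and t becoming loops). Then R(Ĝ;p) = R(G;p) + S(G;p) as polynomials in p. -/
/-!
Merging `s` and `t` identifies only the two terminals, so an edge set `A` is connected in `Ĝ`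
exactly when every vertex reaches `s` or `t` through `A` in `G`. If `s` and `t` reach each other
this says that `A` is connected in `G`; otherwise it says that `A` is an `s`–`t` split. The two
cases exclude each other, so the indicator of connectivity in `Ĝ` is the sum of the indicators
of connectivity and of being a split in `G`, which gives the identity term by term.
-/

open scoped Classical

/-- The multigraph `Ĝ` obtained from a two-terminal graph `G` by merging the source and
the sink into a single vertex (edges between them become loops). -/
def TTGraph.merge (G : TTGraph) : Multigraph where
  V := Quot (fun a b => a = G.s ∧ b = G.t)
  E := G.toMultigraph.E
  ends := fun e => (G.ends e).map (Quot.mk _)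


namespace SimpleGraph

variable {V W : Type*} {G : SimpleGraph V}

theorem Reachable.map_of_adj {G' : SimpleGraph W} (f : V → W)
    (hf : ∀ ⦃a b⦄, G.Adj a b → G'.Reachable (f a) (f b)) {u v : V} (h : G.Reachable u v) :
    G'.Reachable (f u) (f v) := by
  rw [reachable_iff_reflTransGen] at h ⊢
  exact Relation.ReflTransGen.lift' f
    (fun a b hab => (reachable_iff_reflTransGen _ _).mp (hf hab)) _ _ h

theorem Reachable.apply_eq_of_adj (f : V → W) (hf : ∀ ⦃a b⦄, G.Adj a b → f a = f b) {u v : V}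
    (h : G.Reachable u v) : f u = f v :=
  reachable_bot.mp <| h.map_of_adj f fun _ _ hab => reachable_bot.mpr (hf hab)

theorem forall_reachable_or_iff (s t : V) :
    (∀ v, G.Reachable v s ∨ G.Reachable v t) ↔
      G.Connected ∨ ∀ v, Xor (G.Reachable v s) (G.Reachable v t) := by
  constructor
  · intro h
    by_cases hst : G.Reachable s t
    · refine .inl ((connected_iff_exists_forall_reachable _).mpr ⟨s, fun v => ?_⟩)
      rcases h v with hv | hv
      exacts [hv.symm, (hv.trans hst.symm).symm]
    · exact .inr fun v => (h v).elim (fun hs => .inl ⟨hs, fun ht => hst (hs.symm.trans ht)⟩)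
        (fun ht => .inr ⟨ht, fun hs => hst (hs.symm.trans ht)⟩)
  · rintro (hc | hsplit) v
    exacts [.inl (hc.preconnected v s), (hsplit v).or]

theorem Connected.not_forall_xor_reachable (hG : G.Connected) (s t : V) :
    ¬ ∀ v, Xor (G.Reachable v s) (G.Reachable v t) := fun h =>
  (xor_iff_not_iff _ _).mp (h s) (iff_of_true .rfl (hG.preconnected s t))

end SimpleGraph

namespace TTGraph

open SimpleGraph

variable (G : TTGraph)

def mergeMk : G.V → G.merge.V := Quot.mk _

theorem mergeMk_s : G.mergeMk G.s = G.mergeMk G.t := Quot.sound ⟨rfl, rfl⟩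

variable {G} {A : Finset G.E}

theorem reachable_mergeMk {u v : G.V} (h : (G.graphOf A).Reachable u v) :
    (G.merge.graphOf A).Reachable (G.mergeMk u) (G.mergeMk v) := by
  refine h.map_of_adj _ fun a b hab => ?_
  obtain ⟨_, e, he, hab⟩ := hab
  by_cases hne : G.mergeMk a = G.mergeMk b
  · rw [hne]
  · refine Adj.reachable ⟨hne, e, he, ?_⟩
    change (G.ends e).map G.mergeMk = _
    rw [hab, Sym2.map_mk]

theorem exists_adj_of_merge_adj {x y : G.merge.V} (h : (G.merge.graphOf A).Adj x y) :
    ∃ a b, (G.graphOf A).Adj a b ∧ G.mergeMk a = x ∧ G.mergeMk b = y := by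
  obtain ⟨hxy, e, he, hexy⟩ := h
  change (G.ends e).map G.mergeMk = s(x, y) at hexy
  induction hends : G.ends e using Sym2.ind with | h c d => ?_
  rw [hends, Sym2.map_mk, Sym2.eq_iff] at hexy
  have hcd : c ≠ d := by rintro rfl; grind
  rcases hexy with ⟨hc, hd⟩ | ⟨hc, hd⟩
  · exact ⟨c, d, ⟨hcd, e, he, hends⟩, hc, hd⟩
  · exact ⟨d, c, ⟨hcd.symm, e, he, by rw [hends, Sym2.eq_swap]⟩, hd, hc⟩

theorem merge_connected_iff :
    (G.merge.graphOf A).Connected ↔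
      ∀ v, (G.graphOf A).Reachable v G.s ∨ (G.graphOf A).Reachable v G.t := by
  constructor
  · intro h v
    let reachesTerminal : G.merge.V → Prop := Quot.lift
      (fun a => (G.graphOf A).Reachable a G.s ∨ (G.graphOf A).Reachable a G.t)
      (by rintro _ _ ⟨rfl, rfl⟩; exact propext ⟨fun _ => .inr .rfl, fun _ => .inl .rfl⟩)
    have hsv := (h.preconnected (G.mergeMk G.s) (G.mergeMk v)).apply_eq_of_adj reachesTerminal
      fun x y hxy => by
        obtain ⟨a, b, hab, rfl, rfl⟩ := exists_adj_of_merge_adj hxy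
        have hab := hab.reachable
        exact propext ⟨Or.imp hab.symm.trans hab.symm.trans, Or.imp hab.trans hab.trans⟩
    exact cast hsv (.inl .rfl)
  · intro h
    have toS (a : G.V) : (G.merge.graphOf A).Reachable (G.mergeMk a) (G.mergeMk G.s) := by
      rcases h a with ha | ha
      · exact reachable_mergeMk ha
      · exact G.mergeMk_s ▸ reachable_mergeMk ha
    refine (connected_iff_exists_forall_reachable _).mpr ⟨G.mergeMk G.s, ?_⟩
    rintro ⟨a⟩
    exact (toS a).symm

theorem merge_connected_iff_connected_or_isSplit :
    (G.merge.graphOf A).Connected ↔ (G.graphOf A).Connected ∨ G.IsSplit A :=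
  merge_connected_iff.trans (forall_reachable_or_iff _ _)

theorem not_isSplit_of_connected (h : (G.graphOf A).Connected) : ¬ G.IsSplit A :=
  h.not_forall_xor_reachable _ _

end TTGraph

/-- Merging the two terminals of `G` gives
`R(Ĝ;p) = R(G;p) + S(G;p)`. -/
theorem rel_merge (G : TTGraph) (p : ℂ) :
    G.merge.rel p = G.rel p + G.split p := by
  rw [TTGraph.rel, Multigraph.rel, Multigraph.rel, TTGraph.split, ← Finset.sum_add_distrib]
  refine Finset.sum_congr rfl fun (A : Finset G.E) _ => ?_
  by_cases hc : (G.graphOf A).Connected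
  · rw [if_pos (G.merge_connected_iff_connected_or_isSplit.mpr (.inl hc)), if_pos hc,
      if_neg (G.not_isSplit_of_connected hc), add_zero]
    rfl
  · rw [if_neg hc, zero_add]
    exact if_congr (G.merge_connected_iff_connected_or_isSplit.trans (or_iff_right hc)) rfl rfl
end

section
/- Let ε > 0 and let a, b, c ∈ B(0,ε) be complex numbers such that the convex cone spanned by a, b, c equals all of ℂ. Then the set aℕ + bℕ + cℕ = {ma + nb + kc : m,n,k ∈ ℕ} is ε-dense in ℂ, i.e., every z ∈ ℂ is within distance ε of some element of this set. -/
/-!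
From the cone hypothesis applied to `-a`, the vector `-a` is a nonnegative combination of `b`
and `c`. Writing `z = l₁ a + l₂ b + l₃ c` with `lᵢ ≥ 0`, the fractional defect `⌈l₁⌉ - l₁` of the
first coefficient can thus be traded for nonnegative multiples of `b` and `c`, so that
`z = N a + x b + y c` with `N ∈ ℕ` and `x, y ≥ 0`. Rounding `x` and `y` to the nearest naturals
costs less than `(‖b‖ + ‖c‖) / 2 < ε`.
-/

section

variable {E : Type*} [SeminormedAddCommGroup E] [NormedSpace ℝ E]

lemma exists_nat_abs_sub_le_half {x : ℝ} (hx : 0 ≤ x) : ∃ m : ℕ, |x - m| ≤ 1 / 2 := by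
  refine ⟨⌊x + 1 / 2⌋₊, abs_le.2 ⟨?_, ?_⟩⟩
  · linarith [Nat.floor_le (by linarith : 0 ≤ x + 1 / 2)]
  · linarith [Nat.lt_floor_add_one (x + 1 / 2)]

lemma exists_norm_sub_nsmul_add_nsmul_lt {ε : ℝ} {g h : E} (hg : ‖g‖ < ε) (hh : ‖h‖ < ε)
    {x y : ℝ} (hx : 0 ≤ x) (hy : 0 ≤ y) :
    ∃ m n : ℕ, ‖x • g + y • h - (m • g + n • h)‖ < ε := by
  obtain ⟨m, hm⟩ := exists_nat_abs_sub_le_half hx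
  obtain ⟨n, hn⟩ := exists_nat_abs_sub_le_half hy
  refine ⟨m, n, ?_⟩
  have hsplit : x • g + y • h - (m • g + n • h) = (x - m) • g + (y - n) • h := by
    simp only [sub_smul, Nat.cast_smul_eq_nsmul]
    abel
  calc ‖x • g + y • h - (m • g + n • h)‖
      ≤ |x - m| * ‖g‖ + |y - n| * ‖h‖ := by
        rw [hsplit, ← Real.norm_eq_abs, ← Real.norm_eq_abs, ← norm_smul, ← norm_smul]
        exact norm_add_le _ _
    _ ≤ 1 / 2 * ‖g‖ + 1 / 2 * ‖h‖ := by gcongr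
    _ < ε := by linarith

lemma exists_neg_eq_smul_add_smul {a b c : E} {p q r : ℝ} (hp : 0 ≤ p) (hq : 0 ≤ q)
    (hr : 0 ≤ r) (h : -a = p • a + q • b + r • c) :
    ∃ q' r' : ℝ, 0 ≤ q' ∧ 0 ≤ r' ∧ -a = q' • b + r' • c := by
  have hp' : (1 + p)⁻¹ * (1 + p) = 1 := inv_mul_cancel₀ (by positivity)
  refine ⟨(1 + p)⁻¹ * q, (1 + p)⁻¹ * r, by positivity, by positivity, ?_⟩
  have hscaled : (1 + p) • -a = q • b + r • c := by
    rw [add_smul, one_smul, smul_neg, h]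
    abel
  rw [mul_smul, mul_smul, ← smul_add, ← hscaled, smul_smul, hp', one_smul]

lemma exists_nsmul_add_smul_add_smul_eq {a b c : E} {q r : ℝ} (hq : 0 ≤ q) (hr : 0 ≤ r)
    (hneg : -a = q • b + r • c) {l₁ l₂ l₃ : ℝ} (hl₂ : 0 ≤ l₂) (hl₃ : 0 ≤ l₃) :
    ∃ (N : ℕ) (x y : ℝ), 0 ≤ x ∧ 0 ≤ y ∧
      l₁ • a + l₂ • b + l₃ • c = N • a + x • b + y • c := by
  set d := (⌈l₁⌉₊ : ℝ) - l₁
  have hd : 0 ≤ d := sub_nonneg.2 (Nat.le_ceil l₁)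
  refine ⟨⌈l₁⌉₊, l₂ + d * q, l₃ + d * r, by positivity, by positivity, ?_⟩
  have hl₁ : l₁ • a = (⌈l₁⌉₊ : ℝ) • a + d • -a := by
    rw [smul_neg, ← sub_eq_add_neg, ← sub_smul, sub_sub_cancel]
  rw [hl₁, hneg, Nat.cast_smul_eq_nsmul, smul_add, add_smul, add_smul, mul_smul, mul_smul]
  abel

end

theorem natCone_eps_dense_general (ε : ℝ) (a b c : ℂ)
    (hb : ‖b‖ < ε) (hc : ‖c‖ < ε)
    (hcone : ∀ z : ℂ, ∃ l₁ l₂ l₃ : ℝ, 0 ≤ l₁ ∧ 0 ≤ l₂ ∧ 0 ≤ l₃ ∧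
      z = l₁ • a + l₂ • b + l₃ • c) :
    ∀ z : ℂ, ∃ m n k : ℕ, ‖z - ((m : ℂ) * a + (n : ℂ) * b + (k : ℂ) * c)‖ < ε := by
  intro z
  obtain ⟨p, q, r, hp, hq, hr, hrel⟩ := hcone (-a)
  obtain ⟨q', r', hq', hr', hneg⟩ := exists_neg_eq_smul_add_smul hp hq hr hrel
  obtain ⟨l₁, l₂, l₃, -, hl₂, hl₃, hz⟩ := hcone z
  obtain ⟨N, x, y, hx, hy, hz'⟩ := exists_nsmul_add_smul_add_smul_eq hq' hr' hneg hl₂ hl₃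
  obtain ⟨n, k, hnk⟩ := exists_norm_sub_nsmul_add_nsmul_lt hb hc hx hy
  refine ⟨N, n, k, ?_⟩
  have hdiff : z - ((N : ℂ) * a + (n : ℂ) * b + (k : ℂ) * c) =
      x • b + y • c - (n • b + k • c) := by
    rw [hz, hz', nsmul_eq_mul, nsmul_eq_mul, nsmul_eq_mul]
    ring
  rwa [hdiff]

/-- If `a, b, c` lie in the open disk `B(0,ε)` and the convex cone they
span is all of `ℂ`, then the set `aℕ + bℕ + cℕ` is `ε`-dense in `ℂ`. -/
theorem natCone_eps_dense (ε : ℝ) (hε : 0 < ε) (a b c : ℂ)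
    (ha : ‖a‖ < ε) (hb : ‖b‖ < ε) (hc : ‖c‖ < ε)
    (hcone : ∀ z : ℂ, ∃ l₁ l₂ l₃ : ℝ, 0 ≤ l₁ ∧ 0 ≤ l₂ ∧ 0 ≤ l₃ ∧
      z = l₁ • a + l₂ • b + l₃ • c) :
    ∀ z : ℂ, ∃ m n k : ℕ, ‖z - ((m : ℂ) * a + (n : ℂ) * b + (k : ℂ) * c)‖ < ε :=
  natCone_eps_dense_general ε a b c hb hc hcone
end
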